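/- arXiv:2409.11322 — 2 statements merged into one kernel-verified Lean document; each statement's English description precedes it below -/
import Mathlib

section
/- Let xV, xF : ℤ × ℤ → (Fin 5 → ℝ) satisfy Q_M(xV(v), xF(f)) = 0 for every incident vertex–face pair, (x(d))₄ − (x(d))₃ ≠ 0 for every vertex and face d, and suppose that for every p ∈ ℤ × ℤ the four vectors xV(p), xV(p+(1,0)), xV(p+(0,1)), xV(p+(1,1)) span a submodule of ℝ⁵ of finrank at most 3, and likewise the four vectors xF(p), xF(p+(1,0)), xF(p+(0,1)), xF(p+(1,1)). Define bV(d) = ((xV(d))₀, (xV(d))₁, (xV(d))₂)/((xV(d))₄ − (xV(d))₃) and likewise bF. Then (bV, bF) is both a conjugate binet and an orthogonal binet, i.e. a principal binet. (Projections of conjugate polar binets with respect to the Möbius quadric are principal binets.) -/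
open scoped InnerProductSpace

/-- A vertex `v` is incident to the face labeled `f` if `v` is one of its four corners. -/
def Incident (v f : ℤ × ℤ) : Prop :=
  v = f ∨ v = f + (1, 0) ∨ v = f + (0, 1) ∨ v = f + (1, 1)

/-- The Möbius form of signature `(++++-)` on `ℝ⁵`. -/
def QM (x y : Fin 5 → ℝ) : ℝ :=
  x 0 * y 0 + x 1 * y 1 + x 2 * y 2 + x 3 * y 3 - x 4 * y 4

/-- Stereographic projection `x ↦ (x₀, x₁, x₂)/(x₄ - x₃)`. -/
noncomputable def stereo (x : Fin 5 → ℝ) : EuclideanSpace ℝ (Fin 3) :=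
  (x 4 - x 3)⁻¹ • (WithLp.equiv 2 (Fin 3 → ℝ)).symm ![x 0, x 1, x 2]

/-- The set of pairwise differences of elements of a set. -/
def pairDiffs {E : Type*} [AddCommGroup E] (s : Set E) : Set E :=
  {x | ∃ y ∈ s, ∃ z ∈ s, x = y - z}

/-- A map `g : ℤ × ℤ → E` is a conjugate net if the four points of each quad are coplanar,
i.e. the submodule spanned by their pairwise differences has finrank at most `2`. -/
def IsConjugateNet {E : Type*} [AddCommGroup E] [Module ℝ E] (g : ℤ × ℤ → E) : Prop :=
  ∀ p : ℤ × ℤ, Module.finrank ℝ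
    (Submodule.span ℝ (pairDiffs
      ({g p, g (p + (1, 0)), g (p + (0, 1)), g (p + (1, 1))} : Set E))) ≤ 2

/-! Stereographic projection is the central projection `x ↦ x / (x₄ - x₃)` onto the hyperplane
`x₄ - x₃ = 1`, followed by a linear map. The differences of centrally projected points lie in the
kernel of `x₄ - x₃`, which misses the points themselves, so they span a proper subspace of the span
of the points: four points spanning at most three dimensions become coplanar, and a linear map keeps
them coplanar. For polar `x`, `y` the inner product of the projections splits as `σ x + σ y` with
`σ x = (x₄ + x₃) / (2 (x₄ - x₃))`, so the inner product of a vertex edge with the dual face edge is an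
alternating sum of four such terms, which cancels. -/

open Module Submodule

section PairDiffs

variable {K V E : Type*} [Field K] [AddCommGroup V] [Module K V] [AddCommGroup E] [Module K E]

lemma pairDiffs_image {F : Type*} [FunLike F V E] [AddMonoidHomClass F V E] (f : F) (s : Set V) :
    pairDiffs (f '' s) = f '' pairDiffs s := by
  ext x
  constructor
  · rintro ⟨_, ⟨y, hy, rfl⟩, _, ⟨z, hz, rfl⟩, rfl⟩
    exact ⟨y - z, ⟨y, hy, z, hz, rfl⟩, map_sub f y z⟩
  · rintro ⟨_, ⟨y, hy, z, hz, rfl⟩, rfl⟩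
    exact ⟨f y, ⟨y, hy, rfl⟩, f z, ⟨z, hz, rfl⟩, map_sub f y z⟩

lemma span_pairDiffs_le_span (s : Set V) : span K (pairDiffs s) ≤ span K s :=
  span_le.2 fun _ ⟨_, hy, _, hz, hx⟩ => hx ▸ sub_mem (subset_span hy) (subset_span hz)

lemma finrank_span_pairDiffs_lt [FiniteDimensional K V] (φ : V →ₗ[K] K) {s : Set V}
    (hs : ∀ y ∈ s, φ y = 1) (hne : s.Nonempty) :
    finrank K (span K (pairDiffs s)) < finrank K (span K s) := by
  obtain ⟨y, hy⟩ := hne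
  have hker : span K (pairDiffs s) ≤ LinearMap.ker φ :=
    span_le.2 fun _ ⟨a, ha, b, hb, hx⟩ => by simp [hx, hs a ha, hs b hb]
  refine finrank_lt_finrank_of_lt (lt_of_le_of_ne (span_pairDiffs_le_span s) fun heq => ?_)
  have := hker (heq ▸ subset_span hy)
  simp [hs y hy] at this

lemma finrank_span_pairDiffs_image_inv_smul_lt [FiniteDimensional K V] (P : V →ₗ[K] E)
    (h : V →ₗ[K] K) {s : Set V} (hne : s.Nonempty) (hs : ∀ x ∈ s, h x ≠ 0) :
    finrank K (span K (pairDiffs ((fun x => (h x)⁻¹ • P x) '' s))) < finrank K (span K s) := by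
  set u : V → V := fun x => (h x)⁻¹ • x
  have hu : (fun x => (h x)⁻¹ • P x) '' s = P '' (u '' s) := by
    rw [Set.image_image]
    simp only [u, map_smul]
  rw [hu, pairDiffs_image, span_image]
  calc finrank K ((span K (pairDiffs (u '' s))).map P)
      ≤ finrank K (span K (pairDiffs (u '' s))) := finrank_map_le _ _
    _ < finrank K (span K (u '' s)) :=
        finrank_span_pairDiffs_lt h (by rintro _ ⟨x, hx, rfl⟩; simp [u, hs x hx]) (hne.image u)
    _ ≤ finrank K (span K s) :=
        finrank_mono (span_le.2 fun _ ⟨x, hx, hux⟩ => hux ▸ smul_mem _ _ (subset_span hx))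

end PairDiffs

section Stereo

def stereoNum : (Fin 5 → ℝ) →ₗ[ℝ] EuclideanSpace ℝ (Fin 3) :=
  (WithLp.linearEquiv 2 ℝ (Fin 3 → ℝ)).symm.toLinearMap ∘ₗ
    LinearMap.funLeft ℝ ℝ (Fin.castLE (by norm_num))

def stereoDen : (Fin 5 → ℝ) →ₗ[ℝ] ℝ :=
  LinearMap.proj (R := ℝ) (φ := fun _ => ℝ) 4 - LinearMap.proj 3

lemma stereoDen_apply (x : Fin 5 → ℝ) : stereoDen x = x 4 - x 3 := rfl

lemma stereo_eq_inv_smul (x : Fin 5 → ℝ) : stereo x = (stereoDen x)⁻¹ • stereoNum x := by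
  ext i
  fin_cases i <;> simp [stereo, stereoNum, stereoDen_apply]

lemma finrank_span_pairDiffs_image_stereo_lt {s : Set (Fin 5 → ℝ)} (hne : s.Nonempty)
    (hs : ∀ x ∈ s, x 4 - x 3 ≠ 0) :
    finrank ℝ (span ℝ (pairDiffs (stereo '' s))) < finrank ℝ (span ℝ s) := by
  rw [show stereo = _ from funext stereo_eq_inv_smul]
  exact finrank_span_pairDiffs_image_inv_smul_lt stereoNum stereoDen hne hs

lemma isConjugateNet_stereo (x : ℤ × ℤ → Fin 5 → ℝ) (hx : ∀ d, x d 4 - x d 3 ≠ 0)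
    (hconj : ∀ p : ℤ × ℤ, finrank ℝ
      (span ℝ ({x p, x (p + (1, 0)), x (p + (0, 1)), x (p + (1, 1))} : Set (Fin 5 → ℝ))) ≤ 3) :
    IsConjugateNet (fun d => stereo (x d)) := by
  intro p
  have hlt := finrank_span_pairDiffs_image_stereo_lt
    (s := {x p, x (p + (1, 0)), x (p + (0, 1)), x (p + (1, 1))}) (by simp)
    (by rintro _ (rfl | rfl | rfl | rfl) <;> exact hx _)
  rw [Set.image_insert_eq, Set.image_insert_eq, Set.image_insert_eq, Set.image_singleton] at hlt
  exact Nat.lt_succ_iff.mp (hlt.trans_le (hconj p))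

lemma inner_stereo_of_QM_eq_zero {x y : Fin 5 → ℝ} (hx : x 4 - x 3 ≠ 0) (hy : y 4 - y 3 ≠ 0)
    (h : QM x y = 0) :
    ⟪stereo x, stereo y⟫_ℝ
      = (x 4 + x 3) / (2 * (x 4 - x 3)) + (y 4 + y 3) / (2 * (y 4 - y 3)) := by
  have hxy : x 0 * y 0 + x 1 * y 1 + x 2 * y 2 = x 4 * y 4 - x 3 * y 3 := by
    unfold QM at h
    linarith
  have hinner : ⟪(WithLp.equiv 2 (Fin 3 → ℝ)).symm ![x 0, x 1, x 2],
      (WithLp.equiv 2 (Fin 3 → ℝ)).symm ![y 0, y 1, y 2]⟫_ℝ = x 4 * y 4 - x 3 * y 3 := by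
    simp [PiLp.inner_apply, Fin.sum_univ_three]
    linarith
  rw [stereo, stereo, real_inner_smul_left, real_inner_smul_right, hinner]
  field_simp
  ring

lemma inner_sub_stereo_eq_zero {a a' b b' : Fin 5 → ℝ} (ha : a 4 - a 3 ≠ 0)
    (ha' : a' 4 - a' 3 ≠ 0) (hb : b 4 - b 3 ≠ 0) (hb' : b' 4 - b' 3 ≠ 0)
    (hab : QM a b = 0) (hab' : QM a b' = 0) (ha'b : QM a' b = 0) (ha'b' : QM a' b' = 0) :
    ⟪stereo a' - stereo a, stereo b - stereo b'⟫_ℝ = 0 := by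
  rw [inner_sub_left, inner_sub_right, inner_sub_right, inner_stereo_of_QM_eq_zero ha hb hab,
    inner_stereo_of_QM_eq_zero ha hb' hab', inner_stereo_of_QM_eq_zero ha' hb ha'b,
    inner_stereo_of_QM_eq_zero ha' hb' ha'b']
  ring

end Stereo

/-- The stereographic projection of a conjugate polar binet with respect to the Möbius quadric
is a principal binet (both conjugate and orthogonal). -/
theorem stmt_3 (xV xF : ℤ × ℤ → Fin 5 → ℝ)
    (hpolar : ∀ v f : ℤ × ℤ, Incident v f → QM (xV v) (xF f) = 0)
    (hV : ∀ d : ℤ × ℤ, xV d 4 - xV d 3 ≠ 0) (hF : ∀ d : ℤ × ℤ, xF d 4 - xF d 3 ≠ 0)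
    (hconjV : ∀ p : ℤ × ℤ, Module.finrank ℝ
      (Submodule.span ℝ
        ({xV p, xV (p + (1, 0)), xV (p + (0, 1)), xV (p + (1, 1))} : Set (Fin 5 → ℝ))) ≤ 3)
    (hconjF : ∀ p : ℤ × ℤ, Module.finrank ℝ
      (Submodule.span ℝ
        ({xF p, xF (p + (1, 0)), xF (p + (0, 1)), xF (p + (1, 1))} : Set (Fin 5 → ℝ))) ≤ 3) :
    (IsConjugateNet (fun d => stereo (xV d)) ∧ IsConjugateNet (fun d => stereo (xF d))) ∧
    (∀ v : ℤ × ℤ,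
      ⟪stereo (xV (v + (1, 0))) - stereo (xV v),
        stereo (xF v) - stereo (xF (v - (0, 1)))⟫_ℝ = 0 ∧
      ⟪stereo (xV (v + (0, 1))) - stereo (xV v),
        stereo (xF v) - stereo (xF (v - (1, 0)))⟫_ℝ = 0) := by
  refine ⟨⟨isConjugateNet_stereo xV hV hconjV, isConjugateNet_stereo xF hF hconjF⟩,
    fun v => ⟨?_, ?_⟩⟩ <;>
  refine inner_sub_stereo_eq_zero (hV _) (hV _) (hF _) (hF _)
    (hpolar _ _ ?_) (hpolar _ _ ?_) (hpolar _ _ ?_) (hpolar _ _ ?_) <;>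
  simp [Incident, Prod.ext_iff]
end

section
/- Let uV, uF : ℤ × ℤ → (Fin 3 → ℝ) with ‖u(d)‖ = 1 for every vertex and face d, and suppose ⟪uV(v), uF(f)⟫ ≠ 0 for every incident vertex–face pair (v, f). Then there exist nowhere-zero functions σV, σF : ℤ × ℤ → ℝ with ⟪uV(v), uF(f)⟫ = σV(v)·σF(f) for every incident pair (v, f), if and only if for every v ∈ ℤ × ℤ one has ⟪uV(v) ×₃ uV(v+(1,0)), uF(v−(0,1)) ×₃ uF(v)⟫ = 0 and ⟪uV(v) ×₃ uV(v+(0,1)), uF(v−(1,0)) ×₃ uF(v)⟫ = 0, where ×₃ is the cross product on ℝ³. (A bi*net with unit normals u admits a normal binet n(d) = u(d)/σ(d), a polar binet with respect to the unit sphere, if and only if it is an orthogonal bi*net, i.e. the intersection lines of the planes at dual edges are orthogonal.) -/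
open Matrix

/-!
Write `c v f = ⟪uV v, uF f⟫`. By the Binet–Cauchy identity the orthogonality condition at a
cross is the vanishing of the `2 × 2` determinant of `c` on its two vertices and two faces, and
this is clearly necessary for `c v f = σV v σF f`. Conversely, the ratios
`c (v + e) v / c v v` along the edges of the face `v` define a multiplicative `1`-form on the
vertices; the cross conditions say it is independent of the face used to read it off, so it is
closed around every face, hence the differential of a potential `σV` on `ℤ²`, and
`σF f = c f f / σV f` completes the factorization.
-/

open Finset

section Potential

variable {G : Type*} [CommGroup G]

theorem Int.exists_add_one_eq_mul (r : ℤ → G) :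
    ∃ s : ℤ → G, s 0 = 1 ∧ ∀ n, s (n + 1) = s n * r n := by
  refine ⟨fun n => (∏ k ∈ Ico 0 n, r k) / ∏ k ∈ Ico n 0, r k, by simp, fun n => ?_⟩
  rcases le_or_gt 0 n with hn | hn
  · simp [Ico_eq_empty_of_le hn, Ico_eq_empty_of_le (hn.trans (Int.le_add_one le_rfl)),
      prod_Ico_mul_eq_prod_Ico_add_one hn]
  · dsimp only
    rw [← insert_Ico_add_one_left_eq_Ico hn, prod_insert (by simp),
      Ico_eq_empty_of_le hn.le, Ico_eq_empty_of_le (by omega : n + 1 ≤ 0)]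
    simp

theorem exists_potential_of_closed (rX rY : ℤ × ℤ → G)
    (hclosed : ∀ v, rX v * rY (v + (1, 0)) = rY v * rX (v + (0, 1))) :
    ∃ σ : ℤ × ℤ → G, (∀ v, σ (v + (1, 0)) = σ v * rX v) ∧ ∀ v, σ (v + (0, 1)) = σ v * rY v := by
  obtain ⟨a, -, ha⟩ := Int.exists_add_one_eq_mul fun x => rX (x, 0)
  choose b hb0 hb using fun x => Int.exists_add_one_eq_mul fun y => rY (x, y)
  -- closedness makes the discrepancy from `rX` constant along each column
  have hcol : ∀ x y, b x y * rX (x, y) = rX (x, 0) * b (x + 1) y := by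
    intro x y
    have hper : Function.Periodic (fun y => b x y * rX (x, y) / b (x + 1) y) 1 := by
      intro y
      have := hclosed (x, y)
      simp only [Prod.mk_add_mk, add_zero] at this
      simp only [hb, mul_assoc, ← this]
      rw [← mul_assoc, mul_div_mul_right_eq_div]
    have := (hper.int_mul y) 0
    simp only [Int.cast_id, mul_one, zero_add, hb0, one_mul, div_one] at this
    rwa [div_eq_iff_eq_mul] at this
  refine ⟨fun v => a v.1 * b v.1 v.2, fun ⟨x, y⟩ => ?_, fun ⟨x, y⟩ => ?_⟩
  · simp only [Prod.mk_add_mk, add_zero, ha, mul_assoc, hcol]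
  · simp only [Prod.mk_add_mk, add_zero, hb, mul_assoc]

end Potential

/-- The `2 × 2` matrices of `c` over the crosses (rows: the endpoints of the edge, columns: its
two faces) have vanishing determinant. -/
def CrossRankOne {M : Type*} [Mul M] (c : ℤ × ℤ → ℤ × ℤ → M) : Prop :=
  ∀ v : ℤ × ℤ,
    c v (v - (0, 1)) * c (v + (1, 0)) v = c v v * c (v + (1, 0)) (v - (0, 1)) ∧
    c v (v - (1, 0)) * c (v + (0, 1)) v = c v v * c (v + (0, 1)) (v - (1, 0))

theorem incident_iff {v f : ℤ × ℤ} :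
    Incident v f ↔ (v.1 = f.1 ∨ v.1 = f.1 + 1) ∧ (v.2 = f.2 ∨ v.2 = f.2 + 1) := by
  obtain ⟨x, y⟩ := v
  obtain ⟨a, b⟩ := f
  simp only [Incident, Prod.mk_add_mk, Prod.mk.injEq, add_zero]
  tauto

theorem incident_self (f : ℤ × ℤ) : Incident f f := Or.inl rfl

theorem add_one_zero_add_zero_one (v : ℤ × ℤ) : v + (1, 0) + (0, 1) = v + (1, 1) := by
  rw [add_assoc]; rfl

theorem CrossRankOne.of_factorization {M : Type*} [CommMonoid M] {c : ℤ × ℤ → ℤ × ℤ → M}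
    {σV σF : ℤ × ℤ → M} (h : ∀ v f, Incident v f → c v f = σV v * σF f) : CrossRankOne c := by
  intro v
  rw [h v v (incident_self v), h v (v - (0, 1)) (by simp [incident_iff]),
    h (v + (1, 0)) v (by simp [incident_iff]), h (v + (1, 0)) (v - (0, 1)) (by simp [incident_iff]),
    h v (v - (1, 0)) (by simp [incident_iff]), h (v + (0, 1)) v (by simp [incident_iff]),
    h (v + (0, 1)) (v - (1, 0)) (by simp [incident_iff])]
  constructor <;> ac_rfl

section Field

variable {K : Type*} [Field K] {c : ℤ × ℤ → ℤ × ℤ → K}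

-- the cross at the far edge lets the second ratio be read off at the face `v` as well
theorem CrossRankOne.diagonal_ratio_right_up (hcross : CrossRankOne c) (hc0 : ∀ f, c f f ≠ 0)
    (v : ℤ × ℤ) :
    c (v + (1, 0)) v / c v v * (c (v + (1, 0) + (0, 1)) (v + (1, 0)) / c (v + (1, 0)) (v + (1, 0)))
      = c (v + (1, 1)) v / c v v := by
  have h := (hcross (v + (1, 0))).2
  rw [add_sub_cancel_right, add_one_zero_add_zero_one] at h
  rw [add_one_zero_add_zero_one]
  have := hc0 v
  have := hc0 (v + (1, 0))
  field_simp
  linear_combination h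

theorem CrossRankOne.diagonal_ratio_up_right (hcross : CrossRankOne c) (hc0 : ∀ f, c f f ≠ 0)
    (v : ℤ × ℤ) :
    c (v + (0, 1)) v / c v v * (c (v + (0, 1) + (1, 0)) (v + (0, 1)) / c (v + (0, 1)) (v + (0, 1)))
      = c (v + (1, 1)) v / c v v := by
  have h := (hcross (v + (0, 1))).1
  rw [add_sub_cancel_right, add_right_comm, add_one_zero_add_zero_one] at h
  rw [add_right_comm, add_one_zero_add_zero_one]
  have := hc0 v
  have := hc0 (v + (0, 1))
  field_simp
  linear_combination h

theorem exists_factorization_of_crossRankOne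
    (hc : ∀ v f, Incident v f → c v f ≠ 0) (hcross : CrossRankOne c) :
    ∃ σV σF : ℤ × ℤ → K, (∀ v, σV v ≠ 0) ∧ (∀ f, σF f ≠ 0) ∧
      ∀ v f, Incident v f → c v f = σV v * σF f := by
  have hc0 : ∀ f, c f f ≠ 0 := fun f => hc f f (incident_self f)
  have hc10 : ∀ f, c (f + (1, 0)) f ≠ 0 := fun f => hc _ f (by simp [incident_iff])
  have hc01 : ∀ f, c (f + (0, 1)) f ≠ 0 := fun f => hc _ f (by simp [incident_iff])
  -- the prospective ratios `σV w / σV v` along the edges of the face `v`, read off at that face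
  let rX : ℤ × ℤ → Kˣ := fun v =>
    Units.mk0 (c (v + (1, 0)) v / c v v) (div_ne_zero (hc10 v) (hc0 v))
  let rY : ℤ × ℤ → Kˣ := fun v =>
    Units.mk0 (c (v + (0, 1)) v / c v v) (div_ne_zero (hc01 v) (hc0 v))
  have hdiagX : ∀ v, ((rX v * rY (v + (1, 0)) : Kˣ) : K) = c (v + (1, 1)) v / c v v :=
    hcross.diagonal_ratio_right_up hc0
  have hdiagY : ∀ v, ((rY v * rX (v + (0, 1)) : Kˣ) : K) = c (v + (1, 1)) v / c v v :=
    hcross.diagonal_ratio_up_right hc0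
  obtain ⟨σ, hσX, hσY⟩ :=
    exists_potential_of_closed rX rY fun v => Units.ext <| (hdiagX v).trans (hdiagY v).symm
  refine ⟨fun v => σ v, fun f => c f f / σ f, fun v => (σ v).ne_zero,
    fun f => div_ne_zero (hc0 f) (σ f).ne_zero, ?_⟩
  intro v f hvf
  have := hc0 f
  have := (σ f).ne_zero
  rcases hvf with rfl | rfl | rfl | rfl <;> dsimp only
  · field_simp
  · rw [hσX]
    simp only [rX, Units.val_mul, Units.val_mk0]
    field_simp
  · rw [hσY]
    simp only [rY, Units.val_mul, Units.val_mk0]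
    field_simp
  · rw [← add_one_zero_add_zero_one, hσY, hσX, mul_assoc, Units.val_mul, hdiagX,
      add_one_zero_add_zero_one]
    field_simp

end Field

theorem stmt_7_general (uV uF : ℤ × ℤ → Fin 3 → ℝ)
    (hne : ∀ v f : ℤ × ℤ, Incident v f → uV v ⬝ᵥ uF f ≠ 0) :
    (∃ σV σF : ℤ × ℤ → ℝ, (∀ v : ℤ × ℤ, σV v ≠ 0) ∧ (∀ f : ℤ × ℤ, σF f ≠ 0) ∧
        ∀ v f : ℤ × ℤ, Incident v f → uV v ⬝ᵥ uF f = σV v * σF f) ↔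
      (∀ v : ℤ × ℤ,
        (uV v ⨯₃ uV (v + (1, 0))) ⬝ᵥ (uF (v - (0, 1)) ⨯₃ uF v) = 0 ∧
        (uV v ⨯₃ uV (v + (0, 1))) ⬝ᵥ (uF (v - (1, 0)) ⨯₃ uF v) = 0) := by
  simp only [cross_dot_cross, sub_eq_zero]
  constructor
  · rintro ⟨σV, σF, -, -, h⟩
    exact CrossRankOne.of_factorization (c := fun v f => uV v ⬝ᵥ uF f) h
  · exact exists_factorization_of_crossRankOne (c := fun v f => uV v ⬝ᵥ uF f) hne

/-- A bi*net given by unit normals `u` admits a normal binet `n(d) = u(d)/σ(d)` (a polar binet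
with respect to the unit sphere, i.e. `⟪u v, u f⟫ = σ(v)σ(f)` for incident pairs with `σ`
nowhere zero) if and only if it is an orthogonal bi*net: the intersection lines of the planes
at dual edges of every cross are orthogonal. -/
theorem stmt_7 (uV uF : ℤ × ℤ → Fin 3 → ℝ)
    (huV : ∀ d : ℤ × ℤ, uV d ⬝ᵥ uV d = 1) (huF : ∀ d : ℤ × ℤ, uF d ⬝ᵥ uF d = 1)
    (hne : ∀ v f : ℤ × ℤ, Incident v f → uV v ⬝ᵥ uF f ≠ 0) :
    (∃ σV σF : ℤ × ℤ → ℝ, (∀ v : ℤ × ℤ, σV v ≠ 0) ∧ (∀ f : ℤ × ℤ, σF f ≠ 0) ∧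
        ∀ v f : ℤ × ℤ, Incident v f → uV v ⬝ᵥ uF f = σV v * σF f) ↔
      (∀ v : ℤ × ℤ,
        (uV v ⨯₃ uV (v + (1, 0))) ⬝ᵥ (uF (v - (0, 1)) ⨯₃ uF v) = 0 ∧
        (uV v ⨯₃ uV (v + (0, 1))) ⬝ᵥ (uF (v - (1, 0)) ⨯₃ uF v) = 0) :=
  stmt_7_general uV uF hne
end
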